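/- The Max-Min diversity indicator on finite subsets of the Euclidean plane is not submodular: there exist finite subsets S and T of ℝ² (with the Euclidean distance), each with at least two elements and whose intersection has at least two elements, such that D_maxmin(S) + D_maxmin(T) < D_maxmin(S ∪ T) + D_maxmin(S ∩ T). Concretely, one may take the six points a = (0,0), b = (0,1), c = (0,2), d = (4,0), e = (4,1), f = (4,2), with S = {a, b, c, e} and T = {d, e, f, b}, for which D_maxmin(S) = 1, D_maxmin(T) = 1, D_maxmin(S ∪ T) = 1 and D_maxmin(S ∩ T) = 4. -/
import Mathlib


/-- The Max-Min diversity of a finite subset `X` of a metric space: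
the infimum of the pairwise distances between distinct points of `X`
(meaningful when `X` has at least two elements). -/
noncomputable def maxMinDiversity {S : Type*} [MetricSpace S] (X : Finset S) : ℝ :=
  sInf {r : ℝ | ∃ x ∈ X, ∃ y ∈ X, x ≠ y ∧ dist x y = r}

/-- A point of the Euclidean plane with the given coordinates. -/
noncomputable def pt (x y : ℝ) : EuclideanSpace ℝ (Fin 2) :=
  (WithLp.equiv 2 (Fin 2 → ℝ)).symm ![x, y]

lemma pt_inj {a b c d : ℝ} : pt a b = pt c d ↔ a = c ∧ b = d := by
  constructor
  · intro h
    have h0 := congrFun (congrArg (WithLp.equiv 2 (Fin 2 → ℝ)) h) 0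
    have h1 := congrFun (congrArg (WithLp.equiv 2 (Fin 2 → ℝ)) h) 1
    simp [pt] at h0 h1
    exact ⟨h0, h1⟩
  · rintro ⟨rfl, rfl⟩; rfl

lemma dist_pt (a b c d : ℝ) :
    dist (pt a b) (pt c d) = Real.sqrt ((a - c) ^ 2 + (b - d) ^ 2) := by
  rw [EuclideanSpace.dist_eq]
  simp [pt, Fin.sum_univ_two, Real.dist_eq, sq_abs]

lemma dist_pt_eq {a b c d v : ℝ} (hv : 0 ≤ v) (h : (a - c) ^ 2 + (b - d) ^ 2 = v ^ 2) :
    dist (pt a b) (pt c d) = v := by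
  rw [dist_pt, h, Real.sqrt_sq hv]

lemma le_dist_pt {a b c d v : ℝ} (hv : 0 ≤ v) (h : v ^ 2 ≤ (a - c) ^ 2 + (b - d) ^ 2) :
    v ≤ dist (pt a b) (pt c d) := by
  rw [dist_pt]
  exact (Real.le_sqrt hv (by positivity)).2 h

lemma maxMin_eq {X : Finset (EuclideanSpace ℝ (Fin 2))} {v : ℝ}
    (h1 : ∃ x ∈ X, ∃ y ∈ X, x ≠ y ∧ dist x y = v)
    (h2 : ∀ x ∈ X, ∀ y ∈ X, x ≠ y → v ≤ dist x y) :
    maxMinDiversity X = v := by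
  have hlb : ∀ r ∈ {r : ℝ | ∃ x ∈ X, ∃ y ∈ X, x ≠ y ∧ dist x y = r}, v ≤ r := by
    rintro r ⟨x, hx, y, hy, hxy, rfl⟩
    exact h2 x hx y hy hxy
  exact le_antisymm (csInf_le ⟨v, hlb⟩ h1) (le_csInf ⟨v, h1⟩ hlb)

open scoped Classical in
theorem maxMinDiversity_not_submodular :
    (∃ S T : Finset (EuclideanSpace ℝ (Fin 2)),
      2 ≤ S.card ∧ 2 ≤ T.card ∧ 2 ≤ (S ∩ T).card ∧
      maxMinDiversity S + maxMinDiversity T <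
        maxMinDiversity (S ∪ T) + maxMinDiversity (S ∩ T)) ∧
    (maxMinDiversity ({pt 0 0, pt 0 1, pt 0 2, pt 4 1} :
        Finset (EuclideanSpace ℝ (Fin 2))) = 1 ∧
     maxMinDiversity ({pt 4 0, pt 4 1, pt 4 2, pt 0 1} :
        Finset (EuclideanSpace ℝ (Fin 2))) = 1 ∧
     maxMinDiversity (({pt 0 0, pt 0 1, pt 0 2, pt 4 1} :
        Finset (EuclideanSpace ℝ (Fin 2))) ∪ {pt 4 0, pt 4 1, pt 4 2, pt 0 1}) = 1 ∧
     maxMinDiversity (({pt 0 0, pt 0 1, pt 0 2, pt 4 1} :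
        Finset (EuclideanSpace ℝ (Fin 2))) ∩ {pt 4 0, pt 4 1, pt 4 2, pt 0 1}) = 4 ∧
     maxMinDiversity ({pt 0 0, pt 0 1, pt 0 2, pt 4 1} :
        Finset (EuclideanSpace ℝ (Fin 2))) +
       maxMinDiversity ({pt 4 0, pt 4 1, pt 4 2, pt 0 1} :
        Finset (EuclideanSpace ℝ (Fin 2))) <
     maxMinDiversity (({pt 0 0, pt 0 1, pt 0 2, pt 4 1} :
        Finset (EuclideanSpace ℝ (Fin 2))) ∪ {pt 4 0, pt 4 1, pt 4 2, pt 0 1}) +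
       maxMinDiversity (({pt 0 0, pt 0 1, pt 0 2, pt 4 1} :
        Finset (EuclideanSpace ℝ (Fin 2))) ∩ {pt 4 0, pt 4 1, pt 4 2, pt 0 1})) := by
  set S : Finset (EuclideanSpace ℝ (Fin 2)) := {pt 0 0, pt 0 1, pt 0 2, pt 4 1} with hS
  set T : Finset (EuclideanSpace ℝ (Fin 2)) := {pt 4 0, pt 4 1, pt 4 2, pt 0 1} with hT
  have hne01 : pt 0 0 ≠ pt 0 1 := by simp [pt_inj]
  have hne14 : pt 0 1 ≠ pt 4 1 := by simp [pt_inj]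
  have hInter : S ∩ T = {pt 0 1, pt 4 1} := by
    ext x
    simp only [hS, hT, Finset.mem_inter, Finset.mem_insert, Finset.mem_singleton]
    constructor
    · rintro ⟨h1, h2⟩
      rcases h1 with rfl | rfl | rfl | rfl <;>
        rcases h2 with h | h | h | h <;>
        simp_all [pt_inj]
    · rintro (rfl | rfl) <;> simp [pt_inj]
  have hmS : maxMinDiversity S = 1 := by
    apply maxMin_eq
    · exact ⟨pt 0 0, by simp [hS], pt 0 1, by simp [hS], hne01,
        dist_pt_eq (by norm_num) (by norm_num)⟩
    · intro x hx y hy hxy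
      simp only [hS, Finset.mem_insert, Finset.mem_singleton] at hx hy
      rcases hx with rfl | rfl | rfl | rfl <;> rcases hy with rfl | rfl | rfl | rfl <;>
        first
          | exact absurd rfl hxy
          | exact le_dist_pt (by norm_num) (by norm_num)
  have hmT : maxMinDiversity T = 1 := by
    apply maxMin_eq
    · exact ⟨pt 4 0, by simp [hT], pt 4 1, by simp [hT], by simp [pt_inj],
        dist_pt_eq (by norm_num) (by norm_num)⟩
    · intro x hx y hy hxy
      simp only [hT, Finset.mem_insert, Finset.mem_singleton] at hx hy
      rcases hx with rfl | rfl | rfl | rfl <;> rcases hy with rfl | rfl | rfl | rfl <;>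
        first
          | exact absurd rfl hxy
          | exact le_dist_pt (by norm_num) (by norm_num)
  have hmU : maxMinDiversity (S ∪ T) = 1 := by
    apply maxMin_eq
    · exact ⟨pt 0 0, by simp [hS, hT], pt 0 1, by simp [hS, hT], hne01,
        dist_pt_eq (by norm_num) (by norm_num)⟩
    · intro x hx y hy hxy
      simp only [hS, hT, Finset.mem_union, Finset.mem_insert, Finset.mem_singleton] at hx hy
      rcases hx with (rfl | rfl | rfl | rfl) | (rfl | rfl | rfl | rfl) <;>
        rcases hy with (rfl | rfl | rfl | rfl) | (rfl | rfl | rfl | rfl) <;>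
        first
          | exact absurd rfl hxy
          | exact le_dist_pt (by norm_num) (by norm_num)
  have hmI : maxMinDiversity (S ∩ T) = 4 := by
    rw [hInter]
    apply maxMin_eq
    · exact ⟨pt 0 1, by simp, pt 4 1, by simp, hne14,
        dist_pt_eq (by norm_num) (by norm_num)⟩
    · intro x hx y hy hxy
      simp only [Finset.mem_insert, Finset.mem_singleton] at hx hy
      rcases hx with rfl | rfl <;> rcases hy with rfl | rfl <;>
        first
          | exact absurd rfl hxy
          | exact le_dist_pt (by norm_num) (by norm_num)
  have hlt : maxMinDiversity S + maxMinDiversity T <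
      maxMinDiversity (S ∪ T) + maxMinDiversity (S ∩ T) := by
    rw [hmS, hmT, hmU, hmI]; norm_num
  refine ⟨⟨S, T, ?_, ?_, ?_, hlt⟩, hmS, hmT, hmU, hmI, hlt⟩
  · exact Finset.one_lt_card.2 ⟨pt 0 0, by simp [hS], pt 0 1, by simp [hS], hne01⟩
  · exact Finset.one_lt_card.2 ⟨pt 4 0, by simp [hT], pt 4 1, by simp [hT], by simp [pt_inj]⟩
  · rw [hInter]
    exact Finset.one_lt_card.2 ⟨pt 0 1, by simp, pt 4 1, by simp, hne14⟩
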